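/- For partitions X₁, …, Xₙ of Ω, the dual total correlation DTC := H(X₁∨⋯∨Xₙ) − Σᵢ H(Xᵢ | ∨_{j≠i} Xⱼ) equals μ(∪_{i<j} (ΔXᵢ ∩ ΔXⱼ)), the measure of the set of atoms crossed by at least two of the variables. -/

import Mathlib

open Finset BigOperators

variable {Ω : Type*} [Fintype Ω] [DecidableEq Ω]

/-- Probability of a subset: `p(T) = Σ_{ω∈T} p(ω)`. -/
def pS (p : Ω → ℝ) (T : Finset Ω) : ℝ := ∑ ω ∈ T, p ω

/-- `p(T) log p(T)` (with `0 log 0 = 0` since `Real.log 0 = 0`). -/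
noncomputable def plog (p : Ω → ℝ) (T : Finset Ω) : ℝ := pS p T * Real.log (pS p T)

/-- The interior-loss measure of an atom `S`. -/
noncomputable def mu (p : Ω → ℝ) (S : Finset Ω) : ℝ :=
  ∑ T ∈ S.powerset.filter (· ≠ ∅), (-1 : ℝ) ^ (S.card - T.card) * plog p T

/-- `μ` of a set of atoms, extended additively. -/
noncomputable def muSet (p : Ω → ℝ) (R : Finset (Finset Ω)) : ℝ := ∑ S ∈ R, mu p S

/-- A partition `X` crosses an atom `S` when `S` meets at least two distinct parts. -/
def crossed (X : Finpartition (univ : Finset Ω)) (S : Finset Ω) : Prop :=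
  ∃ P ∈ X.parts, ∃ Q ∈ X.parts, P ≠ Q ∧ (S ∩ P).Nonempty ∧ (S ∩ Q).Nonempty

open scoped Classical in
/-- The content `ΔX`: set of atoms crossed by the partition `X`. -/
noncomputable def content (X : Finpartition (univ : Finset Ω)) : Finset (Finset Ω) :=
  (univ : Finset (Finset Ω)).filter (fun S => 2 ≤ S.card ∧ crossed X S)

/-- Shannon entropy of a partition. -/
noncomputable def Hent (p : Ω → ℝ) (X : Finpartition (univ : Finset Ω)) : ℝ :=
  - ∑ P ∈ X.parts, pS p P * Real.log (pS p P)

/-- `X` refines `Z`: every part of `X` lies in a part of `Z`. -/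
def refines (X Z : Finpartition (univ : Finset Ω)) : Prop :=
  ∀ P ∈ X.parts, ∃ Q ∈ Z.parts, P ⊆ Q

/-!
Möbius inversion on the Boolean lattice of atoms gives `p(P) log p(P) = Σ_{∅ ≠ S ⊆ P} μ(S)`.
Applied to `Ω` itself, `μ` sums to `p(Ω) log p(Ω) = 0` over all atoms; applied to the parts of a
partition `Y`, it shows that `−H(Y)` is `μ` of the atoms lying inside a part. Hence `H(Y) = μ(ΔY)`.
An atom is crossed by a common refinement iff it is crossed by one of the partitions, so every
entropy in the DTC is `μ` of a union of contents, and `H(∨ⱼ Xⱼ) − H(∨_{j≠i} Xⱼ)` is `μ` of the atoms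
crossed by `Xᵢ` alone. These sets are disjoint, and removing them from `⋃ᵢ ΔXᵢ` leaves exactly the
atoms crossed by at least two of the `Xᵢ`.
-/

namespace Finset

section Moebius

variable {α R : Type*} [DecidableEq α] [CommRing R]

theorem sum_Icc_neg_one_pow_card_sub {T P : Finset α} (h : T ⊆ P) :
    ∑ S ∈ Icc T P, (-1 : R) ^ (#S - #T) = if T = P then 1 else 0 := by
  have hinj : Set.InjOn (T ∪ ·) ((P \ T).powerset : Set (Finset α)) := fun m hm m' hm' hmm' => by
    have hd : ∀ {m}, m ∈ ((P \ T).powerset : Set (Finset α)) → Disjoint m T := fun hm =>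
      disjoint_of_subset_left (mem_powerset.1 hm) sdiff_disjoint
    rw [← union_sdiff_cancel_left (hd hm).symm, ← union_sdiff_cancel_left (hd hm').symm]
    simp only at hmm'
    rw [hmm']
  rw [Icc_eq_image_powerset h, sum_image hinj]
  calc ∑ m ∈ (P \ T).powerset, (-1 : R) ^ (#(T ∪ m) - #T)
      = ((∑ m ∈ (P \ T).powerset, (-1 : ℤ) ^ #m : ℤ) : R) := by
        push_cast
        refine sum_congr rfl fun m hm => ?_
        rw [card_union_of_disjoint (disjoint_of_subset_right (mem_powerset.1 hm) disjoint_sdiff),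
          Nat.add_sub_cancel_left]
    _ = if T = P then 1 else 0 := by
        have hempty : P \ T = ∅ ↔ T = P :=
          sdiff_eq_empty_iff_subset.trans ⟨h.antisymm, fun hTP => hTP ▸ subset_rfl⟩
        rw [sum_powerset_neg_one_pow_card]
        simp only [hempty]
        split_ifs <;> simp

theorem sum_powerset_sum_powerset_neg_one_pow_mul (f : Finset α → R) (P : Finset α) :
    ∑ S ∈ P.powerset, ∑ T ∈ S.powerset, (-1 : R) ^ (#S - #T) * f T = f P := by
  rw [sum_comm' (t' := P.powerset) (s' := fun T => Icc T P) fun S T => by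
    simp only [mem_powerset, mem_Icc]
    exact ⟨fun ⟨hSP, hTS⟩ => ⟨⟨hTS, hSP⟩, hTS.trans hSP⟩, fun ⟨⟨hTS, hSP⟩, _⟩ => ⟨hSP, hTS⟩⟩]
  calc ∑ T ∈ P.powerset, ∑ S ∈ Icc T P, (-1 : R) ^ (#S - #T) * f T
      = ∑ T ∈ P.powerset, (if T = P then 1 else 0) * f T :=
        sum_congr rfl fun T hT => by
          rw [← sum_mul, sum_Icc_neg_one_pow_card_sub (mem_powerset.1 hT)]
    _ = f P := by simp

end Moebius

section AtLeastTwo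

variable {ι α : Type*} [Fintype ι] [LinearOrder ι] [DecidableEq α] (A : ι → Finset α)

theorem mem_biUnion_sdiff_biUnion_erase {i : ι} {x : α} :
    x ∈ univ.biUnion A \ (univ.erase i).biUnion A ↔ x ∈ A i ∧ ∀ j ≠ i, x ∉ A j := by
  simp only [mem_sdiff, mem_biUnion, mem_univ, true_and, mem_erase, and_true, not_exists, not_and]
  constructor
  · rintro ⟨⟨j, hj⟩, hother⟩
    by_cases hji : j = i
    · exact ⟨hji ▸ hj, hother⟩
    · exact absurd hj (hother j hji)
  · exact fun ⟨hi, hother⟩ => ⟨⟨i, hi⟩, hother⟩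

theorem pairwiseDisjoint_biUnion_sdiff_biUnion_erase :
    ((univ : Finset ι) : Set ι).PairwiseDisjoint
      fun i => univ.biUnion A \ (univ.erase i).biUnion A := by
  intro i _ j _ hij
  rw [Function.onFun, disjoint_left]
  intro x hxi hxj
  exact ((mem_biUnion_sdiff_biUnion_erase A).1 hxj).2 i hij
    ((mem_biUnion_sdiff_biUnion_erase A).1 hxi).1

theorem biUnion_sdiff_biUnion_sdiff_biUnion_erase :
    univ.biUnion A \ univ.biUnion (fun i => univ.biUnion A \ (univ.erase i).biUnion A) =
      (univ.filter fun q : ι × ι => q.1 < q.2).biUnion fun q => A q.1 ∩ A q.2 := by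
  ext x
  rw [mem_sdiff, mem_biUnion, mem_biUnion, mem_biUnion]
  simp only [mem_univ, true_and, mem_biUnion_sdiff_biUnion_erase, not_exists, not_and, not_forall,
    not_not, mem_filter, mem_inter, Prod.exists]
  constructor
  · rintro ⟨⟨i, hi⟩, hshared⟩
    obtain ⟨j, hji, hj⟩ := hshared i hi
    rcases lt_or_gt_of_ne hji with hlt | hlt
    · exact ⟨j, i, hlt, hj, hi⟩
    · exact ⟨i, j, hlt, hi, hj⟩
  · rintro ⟨i, j, hij, hi, hj⟩
    refine ⟨⟨i, hi⟩, fun k _ => ?_⟩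
    by_cases hki : k = i
    · exact ⟨j, hki ▸ hij.ne', hj⟩
    · exact ⟨i, Ne.symm hki, hi⟩

theorem sum_biUnion_sub_sum_sub_sum_biUnion_erase {M : Type*} [AddCommGroup M] (f : α → M) :
    ∑ x ∈ univ.biUnion A, f x
        - ∑ i, (∑ x ∈ univ.biUnion A, f x - ∑ x ∈ (univ.erase i).biUnion A, f x) =
      ∑ x ∈ (univ.filter fun q : ι × ι => q.1 < q.2).biUnion (fun q => A q.1 ∩ A q.2), f x := by
  have hsub (i : ι) : (univ.erase i).biUnion A ⊆ univ.biUnion A :=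
    biUnion_subset_biUnion_of_subset_left A (erase_subset i univ)
  rw [← biUnion_sdiff_biUnion_sdiff_biUnion_erase,
    sum_sdiff_eq_sub (biUnion_subset.2 fun i _ => sdiff_subset),
    sum_biUnion (pairwiseDisjoint_biUnion_sdiff_biUnion_erase A)]
  simp only [sum_sdiff_eq_sub (hsub _)]

end AtLeastTwo

end Finset

section Mu

variable {α : Type*} [DecidableEq α] (p : α → ℝ)

theorem mu_eq_sum_powerset (S : Finset α) :
    mu p S = ∑ T ∈ S.powerset, (-1 : ℝ) ^ (#S - #T) * plog p T := by
  refine sum_filter_of_ne fun T _ hT => ?_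
  rintro rfl
  simp [plog, pS] at hT

theorem mu_empty : mu p ∅ = 0 := by
  simp [mu_eq_sum_powerset, plog, pS]

theorem sum_filter_nonempty_mu (s : Finset (Finset α)) :
    ∑ S ∈ s with S.Nonempty, mu p S = ∑ S ∈ s, mu p S :=
  sum_filter_of_ne fun _ _ hS => nonempty_iff_ne_empty.2 fun h => hS (h ▸ mu_empty p)

theorem plog_eq_sum_mu (P : Finset α) : plog p P = ∑ S ∈ P.powerset, mu p S := by
  simp only [mu_eq_sum_powerset]
  exact (sum_powerset_sum_powerset_neg_one_pow_mul _ P).symm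

end Mu

section Partition

variable {Y Z : Finpartition (univ : Finset Ω)} {S : Finset Ω}

theorem crossed.two_le_card (h : crossed Y S) : 2 ≤ #S := by
  obtain ⟨P, hP, Q, hQ, hPQ, ⟨x, hx⟩, ⟨y, hy⟩⟩ := h
  rw [mem_inter] at hx hy
  refine one_lt_card.2 ⟨x, hx.1, y, hy.1, ?_⟩
  rintro rfl
  exact disjoint_left.1 (Y.disjoint hP hQ hPQ) hx.2 hy.2

theorem crossed.nonempty (h : crossed Y S) : S.Nonempty :=
  card_pos.1 (by have := h.two_le_card; omega)

theorem mem_content : S ∈ content Y ↔ crossed Y S := by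
  classical
  simp only [content, mem_filter, mem_univ, true_and]
  exact ⟨And.right, fun h => ⟨h.two_le_card, h⟩⟩

theorem not_crossed_iff_exists_subset (hS : S.Nonempty) :
    ¬crossed Y S ↔ ∃ P ∈ Y.parts, S ⊆ P := by
  constructor
  · intro h
    obtain ⟨ω, hω⟩ := hS
    obtain ⟨P, hP, hωP⟩ := Y.exists_mem (mem_univ ω)
    refine ⟨P, hP, fun x hx => ?_⟩
    obtain ⟨Q, hQ, hxQ⟩ := Y.exists_mem (mem_univ x)
    by_cases hPQ : P = Q
    · exact hPQ ▸ hxQ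
    · exact absurd ⟨P, hP, Q, hQ, hPQ, ⟨ω, mem_inter.2 ⟨hω, hωP⟩⟩, ⟨x, mem_inter.2 ⟨hx, hxQ⟩⟩⟩ h
  · rintro ⟨P, hP, hSP⟩ ⟨P₁, hP₁, P₂, hP₂, hne, ⟨x, hx⟩, ⟨y, hy⟩⟩
    rw [mem_inter] at hx hy
    exact hne ((Y.eq_of_mem_parts hP₁ hP hx.2 (hSP hx.1)).trans
      (Y.eq_of_mem_parts hP₂ hP hy.2 (hSP hy.1)).symm)

theorem exists_subset_part_inf_iff (hS : S.Nonempty) :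
    (∃ P ∈ (Y ⊓ Z).parts, S ⊆ P) ↔ (∃ P ∈ Y.parts, S ⊆ P) ∧ ∃ Q ∈ Z.parts, S ⊆ Q := by
  constructor
  · rintro ⟨P, hP, hSP⟩
    obtain ⟨P₁, hP₁, hPP₁⟩ := (inf_le_left : Y ⊓ Z ≤ Y) hP
    obtain ⟨P₂, hP₂, hPP₂⟩ := (inf_le_right : Y ⊓ Z ≤ Z) hP
    exact ⟨⟨P₁, hP₁, hSP.trans hPP₁⟩, P₂, hP₂, hSP.trans hPP₂⟩
  · rintro ⟨⟨P, hP, hSP⟩, Q, hQ, hSQ⟩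
    have hSPQ : S ⊆ P ∩ Q := subset_inter hSP hSQ
    refine ⟨P ∩ Q, ?_, hSPQ⟩
    rw [Finpartition.parts_inf]
    exact mem_erase.2 ⟨(hS.mono hSPQ).ne_empty, mem_image.2 ⟨(P, Q), mem_product.2 ⟨hP, hQ⟩, rfl⟩⟩

theorem crossed_inf_iff : crossed (Y ⊓ Z) S ↔ crossed Y S ∨ crossed Z S := by
  rcases S.eq_empty_or_nonempty with rfl | hS
  · simp only [iff_false_intro fun h : crossed _ ∅ => h.nonempty.ne_empty rfl, or_self]
  · rw [← not_iff_not, not_or, not_crossed_iff_exists_subset hS, not_crossed_iff_exists_subset hS,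
      not_crossed_iff_exists_subset hS, exists_subset_part_inf_iff hS]

theorem crossed_inf'_iff {ι : Type*} {s : Finset ι} (hs : s.Nonempty)
    (X : ι → Finpartition (univ : Finset Ω)) :
    crossed (s.inf' hs X) S ↔ ∃ j ∈ s, crossed (X j) S := by
  classical
  induction hs using Nonempty.cons_induction with
  | singleton a => simp
  | cons a s ha hs ih => rw [inf'_cons hs, crossed_inf_iff, ih, cons_eq_insert, exists_mem_insert]

theorem content_inf' {ι : Type*} [DecidableEq ι] {s : Finset ι} (hs : s.Nonempty)
    (X : ι → Finpartition (univ : Finset Ω)) :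
    content (s.inf' hs X) = s.biUnion fun j => content (X j) := by
  ext S
  simp only [mem_content, mem_biUnion, crossed_inf'_iff]

end Partition

section Entropy

variable {Y : Finpartition (univ : Finset Ω)}

theorem sum_mu_eq_zero {p : Ω → ℝ} (hsum : ∑ ω, p ω = 1) : ∑ S, mu p S = 0 := by
  rw [← powerset_univ, ← plog_eq_sum_mu]
  simp [plog, pS, hsum]

theorem biUnion_powerset_nonempty_eq_filter_sdiff_content :
    Y.parts.biUnion (fun P => P.powerset.filter Finset.Nonempty) =
      (univ \ content Y).filter Finset.Nonempty := by
  ext S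
  simp only [mem_biUnion, mem_filter, mem_powerset, mem_sdiff, mem_univ, true_and, mem_content]
  constructor
  · rintro ⟨P, hP, hSP, hS⟩
    exact ⟨(not_crossed_iff_exists_subset hS).2 ⟨P, hP, hSP⟩, hS⟩
  · rintro ⟨hY, hS⟩
    obtain ⟨P, hP, hSP⟩ := (not_crossed_iff_exists_subset hS).1 hY
    exact ⟨P, hP, hSP, hS⟩

theorem pairwiseDisjoint_powerset_nonempty :
    (Y.parts : Set (Finset Ω)).PairwiseDisjoint (fun P => P.powerset.filter Finset.Nonempty) := by
  intro P hP Q hQ hPQ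
  simp only [Function.onFun, disjoint_left, mem_filter, mem_powerset]
  rintro S ⟨hSP, ⟨x, hx⟩⟩ ⟨hSQ, -⟩
  exact disjoint_left.1 (Y.disjoint hP hQ hPQ) (hSP hx) (hSQ hx)

theorem sum_mu_sdiff_content (p : Ω → ℝ) : ∑ S ∈ univ \ content Y, mu p S = -Hent p Y := by
  rw [← sum_filter_nonempty_mu, ← biUnion_powerset_nonempty_eq_filter_sdiff_content,
    sum_biUnion pairwiseDisjoint_powerset_nonempty, Hent, neg_neg]
  exact sum_congr rfl fun P _ => by rw [sum_filter_nonempty_mu, ← plog_eq_sum_mu, plog]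

theorem Hent_eq_muSet {p : Ω → ℝ} (hsum : ∑ ω, p ω = 1) :
    Hent p Y = muSet p (content Y) := by
  have htotal := sum_mu_eq_zero hsum
  rw [← sum_sdiff (subset_univ (content Y)), sum_mu_sdiff_content] at htotal
  rw [muSet]
  linarith

end Entropy

theorem dualTotalCorrelation_eq {Ω : Type*} [Fintype Ω] [DecidableEq Ω] (p : Ω → ℝ)
    (hsum : ∑ ω, p ω = 1)
    {n : ℕ} (hn : 2 ≤ n) (X : Fin n → Finpartition (univ : Finset Ω)) :
    Hent p ((univ : Finset (Fin n)).inf'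
        (univ_nonempty_iff.mpr (Fin.pos_iff_nonempty.mp (by omega))) X)
      - ∑ i, (Hent p ((univ : Finset (Fin n)).inf'
            (univ_nonempty_iff.mpr (Fin.pos_iff_nonempty.mp (by omega))) X)
          - Hent p (((univ : Finset (Fin n)).erase i).inf'
              (Finset.card_pos.mp (by
                rw [Finset.card_erase_of_mem (mem_univ i), Finset.card_univ,
                  Fintype.card_fin]
                omega)) X))
      = muSet p (((univ : Finset (Fin n × Fin n)).filter fun q => q.1 < q.2).biUnion
          fun q => content (X q.1) ∩ content (X q.2)) := by
  simp only [Hent_eq_muSet hsum, content_inf']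
  exact sum_biUnion_sub_sum_sub_sum_biUnion_erase (fun i => content (X i)) (mu p)
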